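/- arXiv:1905.00495 — 2 statements merged into one kernel-verified Lean document; each statement's English description precedes it below -/
import Mathlib

section
/- For the double integrator Forward primitive with ū = √(d u*): any solution of ẋ₁ = x₂, ẋ₂ = -(2u*/ū)x₂ + u* starting with x₁(0) ∈ [0, d] and x₂(0) ∈ (0, ū] has strictly increasing first coordinate, and there exists a finite time T ≥ 0 with x₁(T) = d and x₂(T) ∈ (0, ū]. -/
/-!
`x₂` solves a linear ODE relaxing exponentially to `ū / 2`, so for `t ≥ 0` it stays between
`x₂ 0` and `ū / 2`, hence in `[min (ū / 2) (x₂ 0), ū] ⊆ (0, ū]`. The positive lower bound makes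
`x₁` grow at least linearly, and the intermediate value theorem gives the time at which it
equals `d`.
-/

open Real Set Filter

/-- Integrating factor: `(y t - c) * exp (k * t)` has zero derivative. -/
theorem eq_exp_decay_of_hasDerivAt {y : ℝ → ℝ} {k c : ℝ}
    (hy : ∀ t, HasDerivAt y (-k * (y t - c)) t) (t : ℝ) :
    y t = c + (y 0 - c) * exp (-(k * t)) := by
  have hderiv : ∀ s, HasDerivAt (fun s => (y s - c) * exp (k * s)) 0 s := fun s => by
    have := ((hy s).sub_const c).mul (((hasDerivAt_id s).const_mul k).exp)
    exact this.congr_deriv (by simp only [id]; ring)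
  have hconst := is_const_of_deriv_eq_zero (fun s => (hderiv s).differentiableAt)
    (fun s => (hderiv s).deriv) t 0
  simp only [mul_zero, exp_zero, mul_one] at hconst
  rw [← hconst, mul_assoc, ← exp_add]
  simp

theorem exp_decay_mem_uIcc {k t : ℝ} (hk : 0 ≤ k) (ht : 0 ≤ t) (c y₀ : ℝ) :
    c + (y₀ - c) * exp (-(k * t)) ∈ uIcc c y₀ := by
  have h₀ : 0 ≤ exp (-(k * t)) := (exp_pos _).le
  have h₁ : exp (-(k * t)) ≤ 1 := exp_le_one_iff.mpr (by nlinarith)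
  rw [uIcc, mem_Icc]
  rcases le_total c y₀ with h | h
  · simp only [min_eq_left h, max_eq_right h]
    constructor <;> nlinarith
  · simp only [min_eq_right h, max_eq_left h]
    constructor <;> nlinarith

theorem mul_le_sub_of_le_hasDerivAt {f f' : ℝ → ℝ} (hf : ∀ t, HasDerivAt f (f' t) t) {m : ℝ}
    (hm : ∀ t ≥ 0, m ≤ f' t) {t : ℝ} (ht : 0 ≤ t) : m * t ≤ f t - f 0 := by
  have hcont : ContinuousOn f (Ici 0) := fun s _ => (hf s).continuousAt.continuousWithinAt
  have hdiff : DifferentiableOn ℝ f (interior (Ici 0)) :=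
    fun s _ => (hf s).differentiableAt.differentiableWithinAt
  have := (convex_Ici (0 : ℝ)).mul_sub_le_image_sub_of_le_deriv hcont hdiff
    (fun s hs => (hf s).deriv ▸ hm s (interior_subset hs)) 0 self_mem_Ici t ht ht
  simpa using this

theorem exists_eq_of_le_hasDerivAt {f f' : ℝ → ℝ} (hf : ∀ t, HasDerivAt f (f' t) t) {m : ℝ}
    (hm₀ : 0 < m) (hm : ∀ t ≥ 0, m ≤ f' t) {d : ℝ} (hd : f 0 ≤ d) :
    ∃ T ≥ 0, f T = d := by
  have hcont : ContinuousOn f (Ici 0) := fun s _ => (hf s).continuousAt.continuousWithinAt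
  have htop : Tendsto f atTop atTop := by
    refine tendsto_atTop_mono' atTop ?_
      ((tendsto_id.const_mul_atTop hm₀).atTop_add (tendsto_const_nhds (x := f 0)))
    filter_upwards [eventually_ge_atTop 0] with t ht
    exact le_sub_iff_add_le.mp (mul_le_sub_of_le_hasDerivAt hf hm ht)
  exact intermediate_value_Ici hcont htop hd

/-- For the Forward primitive, trajectories starting in the invariant region
with positive velocity have strictly increasing position and reach the right
face `x₁ = d` in finite time with velocity in `(0, ū]`. -/
theorem forward_reaches_right_face (d u : ℝ) (hd : 0 < d) (hu : 0 < u)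
    (ub : ℝ) (hub : ub = Real.sqrt (d * u))
    (x₁ x₂ : ℝ → ℝ)
    (hode1 : ∀ t, HasDerivAt x₁ (x₂ t) t)
    (hode2 : ∀ t, HasDerivAt x₂ (-(2 * u / ub) * x₂ t + u) t)
    (hx1 : x₁ 0 ∈ Set.Icc 0 d) (hx2 : x₂ 0 ∈ Set.Ioc 0 ub) :
    StrictMonoOn x₁ (Set.Ici 0) ∧
      ∃ T ≥ 0, x₁ T = d ∧ x₂ T ∈ Set.Ioc 0 ub := by
  have hub₀ : 0 < ub := hub ▸ sqrt_pos.mpr (mul_pos hd hu)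
  have hk : 0 ≤ 2 * u / ub := by positivity
  have hrelax : ∀ t, HasDerivAt x₂ (-(2 * u / ub) * (x₂ t - ub / 2)) t := fun t =>
    (hode2 t).congr_deriv (by field_simp; ring)
  set m := min (ub / 2) (x₂ 0)
  have hm : 0 < m := lt_min (by positivity) hx2.1
  have hbounds : ∀ t ≥ 0, m ≤ x₂ t ∧ x₂ t ≤ ub := fun t ht => by
    have h := eq_exp_decay_of_hasDerivAt hrelax t ▸ exp_decay_mem_uIcc hk ht (ub / 2) (x₂ 0)
    exact ⟨h.1, h.2.trans (max_le (by linarith) hx2.2)⟩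
  have hpos : ∀ t ≥ 0, 0 < x₂ t := fun t ht => hm.trans_le (hbounds t ht).1
  refine ⟨strictMonoOn_of_deriv_pos (convex_Ici 0)
    (fun t _ => (hode1 t).continuousAt.continuousWithinAt) fun t ht => ?_, ?_⟩
  · rw [interior_Ici] at ht
    exact (hode1 t).deriv ▸ hpos t (le_of_lt ht)
  · obtain ⟨T, hT, hTd⟩ :=
      exists_eq_of_le_hasDerivAt hode1 hm (fun t ht => (hbounds t ht).1) hx1.2
    exact ⟨T, hT, hTd, hpos T hT, (hbounds T hT).2⟩
end

section
/- For the double integrator Backward controller u(x) = -(2u*/ū)x₂ - u* with ū = √(d u*): any solution of ẋ₁ = x₂, ẋ₂ = u(x) with x₁(0) ∈ [0,d] and x₂(0) ∈ [-ū, 0) satisfies x₂(t) ∈ [-ū, 0) for all t ≥ 0, and there exists finite T with x₁(T) = 0. -/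
/-!
The velocity equation is linear, `ẋ₂ = -k (x₂ + ū/2)` with `k = 2u*/ū > 0`, so
`x₂ t + ū/2 = e^{-kt} (x₂ 0 + ū/2)`: for `t ≥ 0` the velocity stays between its initial value
and the equilibrium `-ū/2`, hence in `[-ū, 0)` and below the negative constant
`max (x₂ 0) (-ū/2)`. The position therefore decreases at a uniform rate and, by the
intermediate value theorem, hits `0` in finite time.
-/

open Real Set

theorem sub_eq_exp_mul_of_hasDerivAt {y : ℝ → ℝ} {k e : ℝ}
    (hy : ∀ t, HasDerivAt y (-k * (y t - e)) t) (t : ℝ) :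
    y t - e = exp (-k * t) * (y 0 - e) := by
  have hconst : ∀ s, HasDerivAt (fun s => (y s - e) * exp (k * s)) 0 s := by
    intro s
    have hexp : HasDerivAt (fun s => exp (k * s)) (exp (k * s) * k) s := by
      simpa using ((hasDerivAt_id s).const_mul k).exp
    exact (((hy s).sub_const e).mul hexp).congr_deriv (by ring)
  have hyt := is_const_of_deriv_eq_zero (fun s => (hconst s).differentiableAt)
    (fun s => (hconst s).deriv) t 0
  calc y t - e = exp (-k * t) * ((y t - e) * exp (k * t)) := by
        rw [mul_left_comm, ← exp_add]; simp
    _ = exp (-k * t) * (y 0 - e) := by simp [hyt]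

theorem mem_uIcc_of_hasDerivAt_of_nonneg {y : ℝ → ℝ} {k e : ℝ} (hk : 0 ≤ k)
    (hy : ∀ t, HasDerivAt y (-k * (y t - e)) t) {t : ℝ} (ht : 0 ≤ t) :
    y t ∈ uIcc e (y 0) := by
  set s := exp (-k * t)
  have hs0 : 0 ≤ s := (exp_pos _).le
  have hs1 : s ≤ 1 := exp_le_one_iff.mpr (by nlinarith)
  have hyt : y t = (1 - s) • e + s • y 0 := by
    have := sub_eq_exp_mul_of_hasDerivAt hy t
    simp only [smul_eq_mul]
    linarith
  exact hyt ▸ segment_subset_uIcc e (y 0) ⟨1 - s, s, by linarith, hs0, by ring, rfl⟩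

theorem exists_eq_zero_of_hasDerivAt_le_neg {f f' : ℝ → ℝ} {m : ℝ}
    (hf : ∀ t, HasDerivAt f (f' t) t) (hm : m < 0) (hf' : ∀ t ≥ 0, f' t ≤ m)
    (h0 : 0 ≤ f 0) : ∃ T ≥ 0, f T = 0 := by
  set T₀ := f 0 / -m
  have hT₀ : 0 ≤ T₀ := div_nonneg h0 (by linarith)
  have hcont : ContinuousOn f (Ici 0) := fun t _ => (hf t).continuousAt.continuousWithinAt
  have hdrop : f T₀ - f 0 ≤ m * (T₀ - 0) :=
    (convex_Ici 0).image_sub_le_mul_sub_of_deriv_le hcont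
      (fun t _ => (hf t).differentiableAt.differentiableWithinAt)
      (fun t ht => (hf t).deriv ▸ hf' t (interior_subset ht)) 0 self_mem_Ici T₀ hT₀ hT₀
  have hfT₀ : f T₀ ≤ 0 := by
    have : m * T₀ = -f 0 := by simp only [T₀]; field_simp [hm.ne]
    linarith
  obtain ⟨T, hT, hfT⟩ := intermediate_value_Icc' hT₀ (hcont.mono Icc_subset_Ici_self)
    ⟨hfT₀, h0⟩
  exact ⟨T, hT.1, hfT⟩

theorem backward_reaches_left_face_general (d u : ℝ) (hu : 0 < u) (ub : ℝ) (x₁ x₂ : ℝ → ℝ)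
    (hode1 : ∀ t, HasDerivAt x₁ (x₂ t) t)
    (hode2 : ∀ t, HasDerivAt x₂ (-(2 * u / ub) * x₂ t - u) t)
    (hx1 : x₁ 0 ∈ Set.Icc 0 d) (hx2 : x₂ 0 ∈ Set.Ico (-ub) 0) :
    (∀ t ≥ 0, x₂ t ∈ Set.Ico (-ub) 0) ∧ ∃ T, x₁ T = 0 := by
  have hub_pos : 0 < ub := by linarith [hx2.1, hx2.2]
  have hode2' : ∀ t, HasDerivAt x₂ (-(2 * u / ub) * (x₂ t - -(ub / 2))) t := fun t =>
    (hode2 t).congr_deriv (by field_simp; ring)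
  have hbounds : ∀ t ≥ 0, min (-(ub / 2)) (x₂ 0) ≤ x₂ t ∧ x₂ t ≤ max (-(ub / 2)) (x₂ 0) :=
    fun t ht => mem_uIcc_of_hasDerivAt_of_nonneg (by positivity) hode2' ht
  have hmax : max (-(ub / 2)) (x₂ 0) < 0 := max_lt (by linarith) hx2.2
  have hmin : -ub ≤ min (-(ub / 2)) (x₂ 0) := le_min (by linarith) hx2.1
  refine ⟨fun t ht => ⟨hmin.trans (hbounds t ht).1, (hbounds t ht).2.trans_lt hmax⟩, ?_⟩
  obtain ⟨T, -, hT⟩ := exists_eq_zero_of_hasDerivAt_le_neg hode1 hmax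
    (fun t ht => (hbounds t ht).2) hx1.1
  exact ⟨T, hT⟩

/-- For the Backward primitive, the velocity stays in `[-ū, 0)` and the
position reaches `0` in finite time. -/
theorem backward_reaches_left_face (d u : ℝ) (hd : 0 < d) (hu : 0 < u)
    (ub : ℝ) (hub : ub = Real.sqrt (d * u))
    (x₁ x₂ : ℝ → ℝ)
    (hode1 : ∀ t, HasDerivAt x₁ (x₂ t) t)
    (hode2 : ∀ t, HasDerivAt x₂ (-(2 * u / ub) * x₂ t - u) t)
    (hx1 : x₁ 0 ∈ Set.Icc 0 d) (hx2 : x₂ 0 ∈ Set.Ico (-ub) 0) :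
    (∀ t ≥ 0, x₂ t ∈ Set.Ico (-ub) 0) ∧ ∃ T, x₁ T = 0 :=
  backward_reaches_left_face_general d u hu ub x₁ x₂ hode1 hode2 hx1 hx2
end
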